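/- arXiv:2106.04083 — 6 statements merged into one kernel-verified Lean document; each statement's English description precedes it below -/
import Mathlib

section
/- Let d_1, d_2, …, d_n be positive integers with sum D, and write D = dn + r with 0 ≤ r < n. Then the potential P(d_1, …, d_n) = Σ_{i<j} min{d_i, d_j} is at most P(d, …, d, d+1, …, d+1), where d appears n−r times and d+1 appears r times. -/
/-!
Slice the potential by levels: since `min a b` counts the levels `ℓ` with `ℓ < a` and `ℓ < b`,
`P(d) = ∑_ℓ C(c_ℓ, 2)` where `c_ℓ = #{i | ℓ < d i}`. The layer sizes satisfy `c_ℓ ≤ n` and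
`∑_ℓ c_ℓ = D`, and since `C(·, 2)` is convex such a sum is largest when the layers are as full as
possible, i.e. `q` layers of size `n` and one of size `r`, which are exactly the layers of the
balanced sequence.
-/

namespace AvgConn

open Finset

theorem add_choose_two (a b : ℕ) : (a + b).choose 2 = a.choose 2 + a * b + b.choose 2 := by
  induction b with
  | zero => simp
  | succ b ih =>
    rw [← add_assoc, Nat.choose_succ_succ', ih, Nat.choose_succ_succ' b, Nat.choose_one_right,
      Nat.choose_one_right]
    ring

theorem choose_two_add_choose_two_le {x y u v : ℕ} (hx : x ≤ u) (hy : y ≤ u)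
    (h : x + y = u + v) : x.choose 2 + y.choose 2 ≤ u.choose 2 + v.choose 2 := by
  obtain ⟨a, rfl⟩ := Nat.exists_eq_add_of_le hx
  obtain rfl : y = v + a := by omega
  have hvx : v * a ≤ x * a := Nat.mul_le_mul_right a (by omega)
  rw [add_choose_two, add_choose_two]
  omega

theorem sum_choose_two_le_of_sum_eq {α : Type*} [DecidableEq α] {n : ℕ} (c : α → ℕ) (s : Finset α)
    (hc : ∀ a ∈ s, c a ≤ n) {q r : ℕ} (hr : r < n) (hs : ∑ a ∈ s, c a = q * n + r) :
    ∑ a ∈ s, (c a).choose 2 ≤ q * n.choose 2 + r.choose 2 := by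
  induction s using Finset.induction_on generalizing q r with
  | empty =>
    obtain ⟨hqn, rfl⟩ : q * n = 0 ∧ r = 0 := by rw [sum_empty] at hs; omega
    rcases Nat.mul_eq_zero.mp hqn with rfl | rfl <;> simp
  | insert b s hb ih =>
    rw [sum_insert hb] at hs ⊢
    have hcb : c b ≤ n := hc b (mem_insert_self b s)
    have hcs : ∀ a ∈ s, c a ≤ n := fun a ha => hc a (mem_insert_of_mem ha)
    by_cases hbr : c b ≤ r
    · have hrest := ih hcs (q := q) (r := r - c b) (by omega) (by omega)
      have hmerge := choose_two_add_choose_two_le (v := 0) hbr (Nat.sub_le r (c b)) (by omega)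
      rw [Nat.choose_zero_succ] at hmerge
      omega
    · -- `c b` overflows the partial layer `r`, so the rest is `q - 1` full layers and `n + r - c b`
      obtain ⟨q, rfl⟩ : ∃ q', q = q' + 1 := by
        refine Nat.exists_eq_add_one.mpr (Nat.pos_of_ne_zero ?_)
        rintro rfl
        omega
      rw [add_one_mul] at hs ⊢
      have hrest := ih hcs (q := q) (r := n + r - c b) (by omega) (by omega)
      have hexchange :=
        choose_two_add_choose_two_le (y := n + r - c b) (v := r) hcb (by omega) (by omega)
      omega

section Potential

variable {ι : Type*} [Fintype ι]

theorem card_range_filter_lt {a M : ℕ} (ha : a ≤ M) : #{ℓ ∈ range M | ℓ < a} = a := by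
  rw [show {ℓ ∈ range M | ℓ < a} = range a by ext ℓ; simp only [mem_filter, mem_range]; omega,
    card_range]

theorem sum_range_card_filter_lt (d : ι → ℕ) {M : ℕ} (hM : ∀ i, d i ≤ M) :
    ∑ ℓ ∈ range M, #{i | ℓ < d i} = ∑ i, d i := by
  simp_rw [card_filter]
  rw [sum_comm]
  exact sum_congr rfl fun i _ => by rw [← card_filter, card_range_filter_lt (hM i)]

variable [LinearOrder ι] [LocallyFiniteOrderTop ι]

def potential (d : ι → ℕ) : ℕ :=
  ∑ i, ∑ j ∈ Ioi i, min (d i) (d j)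

theorem sum_sum_Ioi_ite_and (p : ι → Prop) [DecidablePred p] :
    ∑ i, ∑ j ∈ Ioi i, (if p i ∧ p j then 1 else 0) = (#{i | p i}).choose 2 := by
  rw [← card_product_filter_lt, card_filter, sum_product, sum_filter]
  refine sum_congr rfl fun i _ => ?_
  rw [sum_filter, ← filter_lt_eq_Ioi, sum_filter]
  by_cases hi : p i <;> simp [hi, ← ite_and, and_comm]

theorem potential_eq_sum_choose_two (d : ι → ℕ) {M : ℕ} (hM : ∀ i, d i ≤ M) :
    potential d = ∑ ℓ ∈ range M, (#{i | ℓ < d i}).choose 2 := by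
  calc potential d
      = ∑ i, ∑ j ∈ Ioi i, ∑ ℓ ∈ range M, if ℓ < d i ∧ ℓ < d j then 1 else 0 := by
        refine sum_congr rfl fun i _ => sum_congr rfl fun j _ => ?_
        rw [← card_range_filter_lt (min_le_of_left_le (hM i)), card_filter]
        simp only [lt_min_iff]
    _ = ∑ ℓ ∈ range M, ∑ i, ∑ j ∈ Ioi i, if ℓ < d i ∧ ℓ < d j then 1 else 0 := by
        simp_rw [sum_comm (s := range M)]
    _ = ∑ ℓ ∈ range M, (#{i | ℓ < d i}).choose 2 := by
        simp_rw [sum_sum_Ioi_ite_and]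

end Potential

def balanced (n q r : ℕ) (i : Fin n) : ℕ := if (i : ℕ) < n - r then q else q + 1

theorem card_lt_balanced {n q r ℓ : ℕ} (hℓ : ℓ < q) : #{i | ℓ < balanced n q r i} = n := by
  rw [filter_true_of_mem fun i _ => by unfold balanced; split_ifs <;> omega, card_univ,
    Fintype.card_fin]

theorem card_balanced_gt {n q r : ℕ} (hr : r ≤ n) : #{i | q < balanced n q r i} = r := by
  have h := card_filter_add_card_filter_not (s := univ) fun i : Fin n => (i : ℕ) < n - r
  rw [Fin.card_filter_val_lt, card_univ, Fintype.card_fin] at h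
  rw [filter_congr fun i _ => show q < balanced n q r i ↔ ¬ (i : ℕ) < n - r by
    unfold balanced; split_ifs <;> simp_all]
  omega

theorem potential_balanced {n q r : ℕ} (hr : r ≤ n) :
    potential (balanced n q r) = q * n.choose 2 + r.choose 2 := by
  rw [potential_eq_sum_choose_two (balanced n q r) (M := q + 1)
      fun i => by unfold balanced; split_ifs <;> omega,
    sum_range_succ, sum_congr rfl fun ℓ hℓ => by rw [card_lt_balanced (mem_range.mp hℓ)],
    sum_const, card_range, smul_eq_mul, card_balanced_gt hr]

theorem potential_le_balanced_general (n q r : ℕ) (hr : r < n)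
    (d : Fin n → ℕ) (hsum : ∑ i, d i = q * n + r) :
    ∑ i : Fin n, ∑ j ∈ Finset.Ioi i, min (d i) (d j) ≤
      ∑ i : Fin n, ∑ j ∈ Finset.Ioi i,
        min (if (i : ℕ) < n - r then q else q + 1)
          (if (j : ℕ) < n - r then q else q + 1) := by
  have hd : ∀ i, d i ≤ ∑ j, d j := fun i =>
    single_le_sum (fun j _ => Nat.zero_le (d j)) (mem_univ i)
  calc potential d
      = ∑ ℓ ∈ range (∑ j, d j), (#{i | ℓ < d i}).choose 2 := potential_eq_sum_choose_two d hd
    _ ≤ q * n.choose 2 + r.choose 2 :=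
        sum_choose_two_le_of_sum_eq _ _
          (fun ℓ _ => card_le_univ _ |>.trans_eq (Fintype.card_fin n)) hr
          (by rw [sum_range_card_filter_lt d hd, hsum])
    _ = potential (balanced n q r) := (potential_balanced hr.le).symm

theorem potential_le_balanced (n q r : ℕ) (hn : 0 < n) (hr : r < n)
    (d : Fin n → ℕ) (hpos : ∀ i, 0 < d i) (hsum : ∑ i, d i = q * n + r) :
    ∑ i : Fin n, ∑ j ∈ Finset.Ioi i, min (d i) (d j) ≤
      ∑ i : Fin n, ∑ j ∈ Finset.Ioi i,
        min (if (i : ℕ) < n - r then q else q + 1)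
          (if (j : ℕ) < n - r then q else q + 1) :=
  potential_le_balanced_general n q r hr d hsum

end AvgConn
end

section
/- If s positive integers d_1, …, d_s each exceed k and have sum equal to k(n−s) for some n > s, then Σ_{1≤i<j≤s} min{d_i, d_j} ≤ (d)·C(s,2) + C(r,2), where k(n−s) = ds + r with 0 ≤ r < s. -/
/-!
Layer-cake decomposition: with `m t = #{i | t < d i}` (`layer d t`) one has `∑ₜ m t = ∑ᵢ d i` and
`∑ₜ (m t)² = ∑ᵢ ∑ⱼ min (d i) (d j)`, so the pair sum `P` satisfies
`2 P + N + ∑ₜ m t (s - m t) = s N` where `N = ∑ᵢ d i`. Since `0 ≤ m t ≤ s`, the defect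
`∑ₜ m t (s - m t)` is at least `r (s - r)` with `r = N % s`, because `x ↦ (x % s)(s - x % s)` is
subadditive. Substituting `N = q s + r` gives `2 P ≤ q s (s - 1) + r (r - 1)`.
-/

namespace AvgConn

open Finset

lemma two_mul_choose_two_add_self (n : ℕ) : 2 * n.choose 2 + n = n * n := by
  rw [Nat.choose_two_right, Nat.mul_div_cancel' n.even_mul_pred_self.two_dvd]
  cases n with
  | zero => rfl
  | succ n => rw [Nat.add_sub_cancel]; ring

lemma mod_mul_sub_mod_add_le (s a b : ℕ) :
    (a + b) % s * (s - (a + b) % s) ≤ a % s * (s - a % s) + b % s * (s - b % s) := by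
  rcases Nat.eq_zero_or_pos s with rfl | hs
  · simp
  rw [Nat.add_mod]
  have ha := Nat.mod_lt a hs
  have hb := Nat.mod_lt b hs
  generalize a % s = x at ha ⊢
  generalize b % s = y at hb ⊢
  rcases lt_or_ge (x + y) s with hxy | hxy
  · rw [Nat.mod_eq_of_lt hxy]
    zify [ha.le, hb.le, hxy.le]
    nlinarith
  · -- with `u = s - x`, `v = s - y` the two sides differ by `2 u v`
    have hmod : (x + y) % s = x + y - s := by
      rw [Nat.mod_eq_sub_mod hxy, Nat.mod_eq_of_lt (by omega)]
    rw [hmod]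
    zify [ha.le, hb.le, hxy, (by omega : x + y - s ≤ s)]
    nlinarith

lemma mod_mul_sub_mod_sum_le {ι : Type*} (s : ℕ) (t : Finset ι) (f : ι → ℕ)
    (hf : ∀ i ∈ t, f i ≤ s) :
    (∑ i ∈ t, f i) % s * (s - (∑ i ∈ t, f i) % s) ≤ ∑ i ∈ t, f i * (s - f i) := by
  refine (le_sum_of_subadditive (fun x => x % s * (s - x % s)) (by simp)
    (mod_mul_sub_mod_add_le s) t f).trans (sum_le_sum fun i hi => ?_)
  rcases (hf i hi).lt_or_eq with h | h
  · rw [Nat.mod_eq_of_lt h]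
  · simp [h]

lemma sum_sum_eq_two_nsmul_sum_sum_Ioi_add_sum {ι M : Type*} [Fintype ι] [LinearOrder ι]
    [LocallyFiniteOrderTop ι] [LocallyFiniteOrderBot ι] [AddCommMonoid M] (f : ι → ι → M)
    (hf : ∀ i j, f i j = f j i) :
    ∑ i, ∑ j, f i j = 2 • ∑ i, ∑ j ∈ Ioi i, f i j + ∑ i, f i i := by
  have hoff := sum_sum_Ioi_add_eq_sum_sum_off_diag f
  simp_rw [hf _ (_ : ι), ← two_nsmul] at hoff
  simp_rw [smul_sum, hoff, ← sum_add_distrib]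
  refine sum_congr rfl fun i _ => ?_
  simpa using (sum_compl_add_sum {i} (f i)).symm

section LayerCake

variable {ι : Type*} [Fintype ι]

def layer (d : ι → ℕ) (t : ℕ) : ℕ := #{i | t < d i}

lemma layer_le_card (d : ι → ℕ) (t : ℕ) : layer d t ≤ Fintype.card ι :=
  card_filter_le _ _

lemma layer_eq_sum_ite (d : ι → ℕ) (t : ℕ) : layer d t = ∑ i, if t < d i then 1 else 0 :=
  card_filter _ _

lemma sum_range_ite_lt {a N : ℕ} (h : a ≤ N) : ∑ t ∈ range N, (if t < a then 1 else 0) = a := by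
  rw [sum_boole, Nat.cast_id, show {t ∈ range N | t < a} = range a by ext; simp only [mem_filter, mem_range]; omega,
    card_range]

lemma sum_range_layer {d : ι → ℕ} {N : ℕ} (h : ∀ i, d i ≤ N) :
    ∑ t ∈ range N, layer d t = ∑ i, d i := by
  simp_rw [layer_eq_sum_ite]
  rw [sum_comm]
  exact sum_congr rfl fun i _ => sum_range_ite_lt (h i)

lemma sum_range_layer_sq {d : ι → ℕ} {N : ℕ} (h : ∀ i, d i ≤ N) :
    ∑ t ∈ range N, layer d t ^ 2 = ∑ i, ∑ j, min (d i) (d j) := by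
  simp_rw [layer_eq_sum_ite, sq, sum_mul_sum, ite_zero_mul_ite_zero, ← lt_min_iff, mul_one]
  rw [sum_comm]
  refine sum_congr rfl fun i _ => ?_
  rw [sum_comm]
  exact sum_congr rfl fun j _ => sum_range_ite_lt ((min_le_left _ _).trans (h i))

lemma layer_sq_add_layer_mul_sub (d : ι → ℕ) (t : ℕ) :
    layer d t ^ 2 + layer d t * (Fintype.card ι - layer d t) = Fintype.card ι * layer d t := by
  rw [sq, ← mul_add, Nat.add_sub_cancel' (layer_le_card d t), mul_comm]

end LayerCake

theorem two_mul_sum_sum_Ioi_min_add_le {ι : Type*} [Fintype ι] [LinearOrder ι]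
    [LocallyFiniteOrderTop ι] [LocallyFiniteOrderBot ι] (d : ι → ℕ) :
    2 * ∑ i, ∑ j ∈ Ioi i, min (d i) (d j) + ∑ i, d i
        + (∑ i, d i) % Fintype.card ι * (Fintype.card ι - (∑ i, d i) % Fintype.card ι)
      ≤ Fintype.card ι * ∑ i, d i := by
  obtain ⟨N, hN⟩ : ∃ N, ∑ i, d i = N := ⟨_, rfl⟩
  rw [hN]
  have hdN : ∀ i, d i ≤ N := fun i => hN ▸ single_le_sum (by simp) (mem_univ i)
  have hpairs : ∑ t ∈ range N, layer d t ^ 2 = 2 * ∑ i, ∑ j ∈ Ioi i, min (d i) (d j) + N := by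
    rw [sum_range_layer_sq hdN, ← smul_eq_mul, ← hN,
      sum_sum_eq_two_nsmul_sum_sum_Ioi_add_sum _ fun i j => min_comm _ _]
    simp_rw [min_self]
  have hdefect := mod_mul_sub_mod_sum_le _ (range N) (layer d) fun t _ => layer_le_card d t
  rw [sum_range_layer hdN, hN] at hdefect
  have htotal : ∑ t ∈ range N, layer d t ^ 2
      + ∑ t ∈ range N, layer d t * (Fintype.card ι - layer d t) = Fintype.card ι * N := by
    rw [← sum_add_distrib, sum_congr rfl fun t _ => layer_sq_add_layer_mul_sub d t, ← mul_sum,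
      sum_range_layer hdN, hN]
  omega

theorem potential_bound_high_degree_vertices_general (k n s q r : ℕ)
    (d : Fin s → ℕ)
    (hsum : ∑ i, d i = k * (n - s)) (hq : k * (n - s) = q * s + r) (hr : r < s) :
    ∑ i : Fin s, ∑ j ∈ Finset.Ioi i, min (d i) (d j) ≤
      q * s.choose 2 + r.choose 2 := by
  have hbound := two_mul_sum_sum_Ioi_min_add_le d
  rw [Fintype.card_fin, hsum, hq, Nat.mul_add_mod_of_lt hr] at hbound
  have hs_choose := two_mul_choose_two_add_self s
  have hr_choose := two_mul_choose_two_add_self r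
  zify [hr.le] at hbound hs_choose hr_choose ⊢
  nlinarith

theorem potential_bound_high_degree_vertices (k n s q r : ℕ) (hs : 0 < s)
    (hns : s < n) (d : Fin s → ℕ) (hd : ∀ i, k < d i)
    (hsum : ∑ i, d i = k * (n - s)) (hq : k * (n - s) = q * s + r) (hr : r < s) :
    ∑ i : Fin s, ∑ j ∈ Finset.Ioi i, min (d i) (d j) ≤
      q * s.choose 2 + r.choose 2 :=
  potential_bound_high_degree_vertices_general k n s q r d hsum hq hr

end AvgConn
end

section
/- Let k ≥ 2 and let G be a minimally k-edge-connected graph of order n ≥ 2k+1 that is degree-partitioned. Then the average edge-connectivity of G satisfies λ̄(G) ≤ k + k(n−2)²/(8n(n−1)) < (9/8)k. -/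
namespace AvgConn

/-- The degree of a vertex, as the cardinality of its neighbourhood. -/
noncomputable def deg {V : Type*} (G : SimpleGraph V) (v : V) : ℕ :=
  (G.neighborSet v).ncard

/-- `localEdgeConn G u v` is the maximum number of pairwise edge-disjoint `u`–`v` paths. -/
noncomputable def localEdgeConn {V : Type*} (G : SimpleGraph V) (u v : V) : ℕ :=
  sSup {m | ∃ f : Fin m → G.Walk u v, (∀ i, (f i).IsPath) ∧
    ∀ i j, i ≠ j → ∀ e ∈ (f i).edges, e ∉ (f j).edges}

/-- The edge connectivity of `G`: the least number of edges whose removal disconnects `G`. -/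
noncomputable def edgeConn {V : Type*} (G : SimpleGraph V) : ℕ :=
  sInf {n | ∃ F : Set (Sym2 V), F ⊆ G.edgeSet ∧ F.ncard = n ∧
    ¬ (G.deleteEdges F).Connected}

/-- `G` is minimally `k`-edge-connected. -/
noncomputable def MinimallyKEdgeConnected {V : Type*} (G : SimpleGraph V) (k : ℕ) : Prop :=
  edgeConn G = k ∧ ∀ e ∈ G.edgeSet, edgeConn (G.deleteEdges {e}) < k

/-- `G` is degree-partitioned (for `k`): every vertex has degree at least `k`, and `G` is
bipartite with partite sets the vertices of degree `k` and the vertices of degree exceeding `k`. -/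
noncomputable def DegreePartitioned {V : Type*} (G : SimpleGraph V) (k : ℕ) : Prop :=
  (∀ v, k ≤ deg G v) ∧
    ∀ u v, G.Adj u v → (deg G u = k ∧ k < deg G v) ∨ (k < deg G u ∧ deg G v = k)

/-!
Pairs of distinct vertices satisfy `λ(u, v) ≤ min (deg u) (deg v)`. Let `A` be the vertices of
degree `k` and `B` the others, with `a = |A|`, `b = |B|`. Every ordered pair meeting `A`
contributes at most `k`. Since `G` is bipartite between `A` and `B`, the degrees in `B` add up to
`k a`, so the ordered pairs inside `B` contribute at most `(b - 1) k a`. The excess over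
`k n (n - 1)` is then `k (b - 1) (a - b) = k (n - 2)² / 8 - k ((a - 1) - 3 (b - 1))² / 8`.
-/

open Finset SimpleGraph

lemma sum_offDiag_fst_add_sum {α M : Type*} [DecidableEq α] [AddCommMonoid M]
    (s : Finset α) (f : α → M) :
    ∑ p ∈ s.offDiag, f p.1 + ∑ x ∈ s, f x = #s • ∑ x ∈ s, f x := by
  rw [add_comm, ← sum_diag s (fun p => f p.1), ← sum_union (disjoint_diag_offDiag s),
    diag_union_offDiag, sum_product, sum_comm, sum_diag]
  simp [sum_const]

section LocalEdgeConn

variable {V : Type*} {G : SimpleGraph V} {u v : V}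

lemma card_le_deg_of_edgeDisjoint_walks (huv : u ≠ v) (hu : (G.neighborSet u).Finite) {m : ℕ}
    (f : Fin m → G.Walk u v) (hf : ∀ i j, i ≠ j → ∀ e ∈ (f i).edges, e ∉ (f j).edges) :
    m ≤ deg G u := by
  have hnil : ∀ i, ¬ (f i).Nil := fun i => Walk.not_nil_of_ne huv
  calc m = (Set.univ : Set (Fin m)).ncard := by simp
    _ ≤ deg G u := Set.ncard_le_ncard_of_injOn (fun i => (f i).snd)
        (fun i _ => (f i).adj_snd (hnil i)) ?_ hu
  intro i _ j _ (hij : (f i).snd = (f j).snd)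
  by_contra hne
  exact hf i j hne _ ((f i).mk_start_snd_mem_edges (hnil i))
    (hij ▸ (f j).mk_start_snd_mem_edges (hnil j))

lemma localEdgeConn_le_deg_left (huv : u ≠ v) (hu : (G.neighborSet u).Finite) :
    localEdgeConn G u v ≤ deg G u :=
  csSup_le' fun _ ⟨f, _, hf⟩ => card_le_deg_of_edgeDisjoint_walks huv hu f hf

lemma localEdgeConn_le_deg_right (huv : u ≠ v) (hv : (G.neighborSet v).Finite) :
    localEdgeConn G u v ≤ deg G v :=
  csSup_le' fun _ ⟨f, _, hf⟩ => card_le_deg_of_edgeDisjoint_walks huv.symm hv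
    (fun i => (f i).reverse) fun i j hij e hi hj =>
      hf i j hij e (by simpa using hi) (by simpa using hj)

lemma deg_eq_degree (G : SimpleGraph V) (v : V) [Fintype (G.neighborSet v)] :
    deg G v = G.degree v := by
  rw [deg, ← Nat.card_coe_set_eq, Nat.card_eq_fintype_card, card_neighborSet_eq_degree]

end LocalEdgeConn

section Counting

variable {V : Type*} [Fintype V] [DecidableEq V] {G : SimpleGraph V} [DecidableRel G.Adj]
  {k : ℕ}

lemma sum_localEdgeConn_le_of_degree_le (B : Finset V) (hB : ∀ v ∉ B, G.degree v ≤ k) :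
    ∑ p ∈ univ.offDiag, localEdgeConn G p.1 p.2 ≤
      #(univ.offDiag \ B.offDiag) * k + ∑ p ∈ B.offDiag, G.degree p.1 := by
  rw [← sum_sdiff (offDiag_mono (subset_univ B))]
  refine add_le_add (sum_le_card_nsmul _ _ _ fun p hp => ?_) (sum_le_sum fun p hp => ?_)
  · simp only [mem_sdiff, mem_offDiag, mem_univ, true_and, not_and] at hp
    obtain ⟨huv, hpB⟩ := hp
    by_cases hu : p.1 ∈ B
    · have hv : p.2 ∉ B := fun hv => hpB hu hv huv
      exact (localEdgeConn_le_deg_right huv (Set.toFinite _)).trans (deg_eq_degree G _ ▸ hB _ hv)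
    · exact (localEdgeConn_le_deg_left huv (Set.toFinite _)).trans (deg_eq_degree G _ ▸ hB _ hu)
  · rw [← deg_eq_degree]
    exact localEdgeConn_le_deg_left (mem_offDiag.1 hp).2.2 (Set.toFinite _)

end Counting

namespace DegreePartitioned

variable {V : Type*} [Fintype V] {G : SimpleGraph V} {k : ℕ}

lemma isBipartiteWith (hdp : DegreePartitioned G k) :
    G.IsBipartiteWith ↑({v | deg G v = k} : Finset V) ↑({v | deg G v ≠ k} : Finset V) where
  disjoint := disjoint_coe.2 (disjoint_filter_filter_not _ _ _)
  mem_of_adj u v huv := by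
    simp only [coe_filter, mem_univ, true_and, Set.mem_ofPred_eq]
    rcases hdp.2 u v huv with h | h <;> omega

lemma sum_degree_eq [DecidableRel G.Adj] (hdp : DegreePartitioned G k) :
    ∑ v ∈ ({v | deg G v ≠ k} : Finset V), G.degree v = k * #({v | deg G v = k} : Finset V) := by
  rw [← isBipartiteWith_sum_degrees_eq hdp.isBipartiteWith, mul_comm, ← smul_eq_mul,
    ← sum_const]
  exact sum_congr rfl fun v hv => deg_eq_degree G v ▸ (mem_filter.1 hv).2

lemma sum_localEdgeConn_le [DecidableEq V] (hdp : DegreePartitioned G k) :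
    (∑ p ∈ univ.offDiag, (localEdgeConn G p.1 p.2 : ℝ)) ≤
      k * (Fintype.card V * (Fintype.card V - 1)) + k * (Fintype.card V - 2) ^ 2 / 8 := by
  classical
  set B : Finset V := {v | deg G v ≠ k}
  have hcount := sum_localEdgeConn_le_of_degree_le (G := G) (k := k) B fun v hv => by
    rw [← deg_eq_degree]; simp_all [B]
  have hfst := sum_offDiag_fst_add_sum B (G.degree ·)
  rw [hdp.sum_degree_eq, smul_eq_mul] at hfst
  have hcard := card_sdiff_add_card_eq_card (offDiag_mono (subset_univ B))
  rw [offDiag_card, offDiag_card, card_univ] at hcard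
  have hab : #({v | deg G v = k} : Finset V) + #B = Fintype.card V := by
    rw [card_filter_add_card_filter_not, card_univ]
  have hcountR := (Nat.cast_le (α := ℝ)).2 hcount
  have hfstR := congrArg (Nat.cast : ℕ → ℝ) hfst
  have hcardR := congrArg (Nat.cast : ℕ → ℝ) hcard
  have habR := congrArg (Nat.cast : ℕ → ℝ) hab
  push_cast [Nat.cast_sub (Nat.le_mul_self _)] at hcountR hfstR hcardR habR
  generalize #({v | deg G v = k} : Finset V) = a at hfstR hcardR habR
  rw [← habR] at hcardR ⊢
  calc _ ≤ _ := hcountR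
    _ = k * ((a + #B) * (a + #B - 1) - #B * (#B - 1)) + (#B - 1) * (k * a) := by
      rw [eq_sub_of_add_eq hfstR, eq_sub_of_add_eq hcardR]; ring
    _ ≤ _ := by nlinarith [mul_nonneg k.cast_nonneg (sq_nonneg ((a : ℝ) - 3 * #B + 2))]

end DegreePartitioned

theorem avg_edge_connectivity_of_degree_partitioned_min_k_edge_connected_general
    {V : Type*} [Fintype V] [DecidableEq V] (k : ℕ) (hk : 2 ≤ k)
    (G : SimpleGraph V) (hn : 2 * k + 1 ≤ Fintype.card V)
    (hdp : DegreePartitioned G k) :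
    (∑ p ∈ Finset.univ.offDiag, (localEdgeConn G p.1 p.2 : ℝ)) /
        ((Fintype.card V : ℝ) * ((Fintype.card V : ℝ) - 1)) ≤
      (k : ℝ) + k * ((Fintype.card V : ℝ) - 2) ^ 2 /
        (8 * (Fintype.card V : ℝ) * ((Fintype.card V : ℝ) - 1)) ∧
    (∑ p ∈ Finset.univ.offDiag, (localEdgeConn G p.1 p.2 : ℝ)) /
        ((Fintype.card V : ℝ) * ((Fintype.card V : ℝ) - 1)) < 9 / 8 * k := by
  have hsum := hdp.sum_localEdgeConn_le
  set n : ℝ := (Fintype.card V : ℝ)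
  have hn2 : 2 ≤ n := Nat.ofNat_le_cast.2 (by omega)
  have hk0 : (0 : ℝ) < k := Nat.cast_pos.2 (by omega)
  have hpairs : 0 < n * (n - 1) := by nlinarith
  have hle : (∑ p ∈ univ.offDiag, (localEdgeConn G p.1 p.2 : ℝ)) / (n * (n - 1)) ≤
      k + k * (n - 2) ^ 2 / (8 * n * (n - 1)) := by
    rw [div_le_iff₀ hpairs]
    refine hsum.trans_eq ?_
    have : n - 1 ≠ 0 := by linarith
    field_simp
  refine ⟨hle, hle.trans_lt ?_⟩
  have hsq : (n - 2) ^ 2 < n * (n - 1) := by nlinarith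
  have : k * (n - 2) ^ 2 / (8 * n * (n - 1)) < k / 8 := by
    rw [div_lt_div_iff₀ (by linarith) (by norm_num)]
    nlinarith
  linarith

theorem avg_edge_connectivity_of_degree_partitioned_min_k_edge_connected
    {V : Type*} [Fintype V] [DecidableEq V] (k : ℕ) (hk : 2 ≤ k)
    (G : SimpleGraph V) (hn : 2 * k + 1 ≤ Fintype.card V)
    (hG : MinimallyKEdgeConnected G k) (hdp : DegreePartitioned G k) :
    (∑ p ∈ Finset.univ.offDiag, (localEdgeConn G p.1 p.2 : ℝ)) /
        ((Fintype.card V : ℝ) * ((Fintype.card V : ℝ) - 1)) ≤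
      (k : ℝ) + k * ((Fintype.card V : ℝ) - 2) ^ 2 /
        (8 * (Fintype.card V : ℝ) * ((Fintype.card V : ℝ) - 1)) ∧
    (∑ p ∈ Finset.univ.offDiag, (localEdgeConn G p.1 p.2 : ℝ)) /
        ((Fintype.card V : ℝ) * ((Fintype.card V : ℝ) - 1)) < 9 / 8 * k :=
  avg_edge_connectivity_of_degree_partitioned_min_k_edge_connected_general k hk G hn hdp

end AvgConn
end

section
/- Let 3 ≤ k ≤ p and let u, v be nonadjacent vertices of G_{k,p}. If S is a minimal vertex separator of u and v in G_{k,p}, then |S| = k or |S| = 2k−2. -/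
namespace AvgConn

/-- The graph `G_{k,p}` on `W ∪ X`, where `W` and `X` are copies of `Fin p` (`W` given by
`Sum.inl`, `X` by `Sum.inr`), and `w_i` is adjacent to `x_{(i+j) mod p}` for `0 ≤ j ≤ k-1`. -/
def Gkp (k p : ℕ) : SimpleGraph (Fin p ⊕ Fin p) :=
  SimpleGraph.fromRel (fun a b => ∃ i x : Fin p, a = Sum.inl i ∧ b = Sum.inr x ∧
    ∃ j, j < k ∧ (x : ℕ) = ((i : ℕ) + j) % p)

/-- `S` is a vertex separator of `u` and `v`: `u, v ∉ S` and every `u`–`v` walk meets `S`. -/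
def IsSeparator {V : Type*} (G : SimpleGraph V) (u v : V) (S : Set V) : Prop :=
  u ∉ S ∧ v ∉ S ∧ ∀ w : G.Walk u v, ∃ x ∈ w.support, x ∈ S

/-- `S` is a minimal vertex separator of `u` and `v`. -/
def IsMinimalSeparator {V : Type*} (G : SimpleGraph V) (u v : V) (S : Set V) : Prop :=
  IsSeparator G u v S ∧ ∀ T ⊂ S, ¬ IsSeparator G u v T

/-!
Let `A` and `B` be the components of `u` and `v` in `G - S`. By minimality, `S` is exactly the
set of vertices outside `A` having a neighbour in `A`. If `A = {u}` this gives `S = N(u)`, of size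
`k`, and likewise if `B = {v}`.

Otherwise `B` contains some `x_β`, and no `w_i ∈ A` is adjacent to `x_β`. Measuring indices
by their offset `(i - β) mod p` cuts the cycle open at `β`: for `w_i ∈ A` the band adjacency
becomes the interval condition `i ≤ m < i + k` on offsets. A walk inside `A` between two of its
`W`-vertices has to cross every intermediate offset along an edge, which forces the offsets of
`A ∩ W` to form an interval `[a, b]` whose `X`-neighbourhood is `[a, b + k)`. As
`S ∩ X = N(A ∩ W) \ A`, this gives `|S ∩ X| + |A ∩ X| + 1 = |A ∩ W| + k`. The automorphism
`w_i ↦ x_{-i}`, `x_i ↦ w_{-i}` exchanges the two sides and gives the mirror identity; adding the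
two yields `|S| = 2k - 2`.
-/

open SimpleGraph

section Separators

variable {V V' : Type*} {G : SimpleGraph V} {G' : SimpleGraph V'} {S : Set V} {u v z z' : V}

def reachAvoiding (G : SimpleGraph V) (S : Set V) (u : V) : Set V :=
  {z | ∃ w : G.Walk u z, ∀ y ∈ w.support, y ∉ S}

lemma mem_reachAvoiding_self (hu : u ∉ S) : u ∈ reachAvoiding G S u :=
  ⟨.nil, by simpa using hu⟩

lemma notMem_of_mem_reachAvoiding (hz : z ∈ reachAvoiding G S u) : z ∉ S :=
  let ⟨w, hw⟩ := hz
  hw z w.end_mem_support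

lemma mem_reachAvoiding_of_adj (hz : z ∈ reachAvoiding G S u) (hadj : G.Adj z z')
    (hz' : z' ∉ S) : z' ∈ reachAvoiding G S u := by
  obtain ⟨w, hw⟩ := hz
  refine ⟨w.concat hadj, fun y hy => ?_⟩
  rw [Walk.support_concat, List.mem_append, List.mem_singleton] at hy
  rcases hy with hy | rfl
  exacts [hw y hy, hz']

lemma support_subset_reachAvoiding (w : G.Walk u z) (hw : ∀ y ∈ w.support, y ∉ S) :
    ∀ y ∈ w.support, y ∈ reachAvoiding G S u := by
  classical
  exact fun y hy =>
    ⟨w.takeUntil y hy, fun t ht => hw t (w.support_takeUntil_subset_support hy ht)⟩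

lemma exists_walk_of_mem_reachAvoiding (hz : z ∈ reachAvoiding G S u)
    (hz' : z' ∈ reachAvoiding G S u) :
    ∃ w : G.Walk z z', ∀ y ∈ w.support, y ∈ reachAvoiding G S u := by
  obtain ⟨w₁, hw₁⟩ := hz
  obtain ⟨w₂, hw₂⟩ := hz'
  refine ⟨w₁.reverse.append w₂, fun y hy => ?_⟩
  rw [Walk.mem_support_append_iff, Walk.support_reverse, List.mem_reverse] at hy
  exact hy.elim (support_subset_reachAvoiding w₁ hw₁ y)
    (support_subset_reachAvoiding w₂ hw₂ y)

lemma exists_adj_mem_of_nontrivial (hR : (reachAvoiding G S u).Nontrivial)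
    (hz : z ∈ reachAvoiding G S u) : ∃ z' ∈ reachAvoiding G S u, G.Adj z z' := by
  obtain ⟨y, hy, hyz⟩ := hR.exists_ne z
  obtain ⟨w, hw⟩ := exists_walk_of_mem_reachAvoiding hz hy
  obtain ⟨z', hadj, w', rfl⟩ := w.exists_eq_cons_of_ne hyz.symm
  exact ⟨z', hw z' (by simp), hadj⟩

lemma image_reachAvoiding_subset (f : G ↪g G') :
    f '' reachAvoiding G S u ⊆ reachAvoiding G' (f '' S) (f u) := by
  rintro _ ⟨z, ⟨w, hw⟩, rfl⟩
  refine ⟨w.map f.toHom, fun y hy => ?_⟩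
  obtain ⟨x, hx, rfl⟩ := List.mem_map.1 (Walk.support_map f.toHom w ▸ hy)
  exact fun hxS => hw x hx (f.injective.mem_set_image.1 hxS)

lemma reachAvoiding_image (f : G ≃g G') :
    reachAvoiding G' (f '' S) (f u) = f '' reachAvoiding G S u := by
  refine (Set.Subset.antisymm ?_ (image_reachAvoiding_subset f.toEmbedding))
  intro z hz
  have := image_reachAvoiding_subset f.symm.toEmbedding ⟨z, hz, rfl⟩
  simp only [RelIso.coe_toRelEmbedding, Set.image_image, RelIso.symm_apply_apply,
    Set.image_id'] at this
  exact ⟨f.symm z, this, by simp⟩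

lemma isSeparator_iff :
    IsSeparator G u v S ↔ u ∉ S ∧ v ∉ S ∧ v ∉ reachAvoiding G S u := by
  simp [IsSeparator, reachAvoiding]

lemma IsSeparator.notMem_reachAvoiding (h : IsSeparator G u v S) :
    v ∉ reachAvoiding G S u :=
  (isSeparator_iff.1 h).2.2

lemma IsSeparator.symm (h : IsSeparator G u v S) : IsSeparator G v u S := by
  refine ⟨h.2.1, h.1, fun w => ?_⟩
  simpa using h.2.2 w.reverse

lemma IsSeparator.disjoint_reachAvoiding (h : IsSeparator G u v S) :
    Disjoint (reachAvoiding G S u) (reachAvoiding G S v) := by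
  refine Set.disjoint_left.2 fun z ⟨w₁, hw₁⟩ ⟨w₂, hw₂⟩ => ?_
  obtain ⟨x, hx, hxS⟩ := h.2.2 (w₁.append w₂.reverse)
  rw [Walk.mem_support_append_iff, Walk.support_reverse, List.mem_reverse] at hx
  exact hx.elim (hw₁ x · hxS) (hw₂ x · hxS)

lemma IsSeparator.image (f : G ≃g G') (h : IsSeparator G u v S) :
    IsSeparator G' (f u) (f v) (f '' S) := by
  rw [isSeparator_iff, reachAvoiding_image, f.injective.mem_set_image,
    f.injective.mem_set_image, f.injective.mem_set_image]
  exact isSeparator_iff.1 h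

lemma IsMinimalSeparator.symm (h : IsMinimalSeparator G u v S) : IsMinimalSeparator G v u S :=
  ⟨h.1.symm, fun T hT hsep => h.2 T hT hsep.symm⟩

lemma IsMinimalSeparator.image (f : G ≃g G') (h : IsMinimalSeparator G u v S) :
    IsMinimalSeparator G' (f u) (f v) (f '' S) := by
  refine ⟨h.1.image f, fun T hT hsep =>
    h.2 (f.symm '' T) ?_ (by simpa using hsep.image f.symm)⟩
  simpa [Set.image_image] using f.symm.injective.image_strictMono hT

lemma IsMinimalSeparator.exists_adj (hS : IsMinimalSeparator G u v S) {s : V} (hs : s ∈ S) :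
    ∃ a ∈ reachAvoiding G S u, G.Adj a s := by
  -- a `u`–`v` walk avoiding `S \ {s}` can only leave the component of `u` through `s`
  obtain ⟨w, hw⟩ : ∃ w : G.Walk u v, ∀ y ∈ w.support, y ∉ S \ {s} := by
    simpa [IsSeparator, hS.1.1, hS.1.2.1] using hS.2 _ (Set.sdiff_singleton_ssubset.2 hs)
  obtain ⟨d, hd, hd₁, hd₂⟩ := w.exists_boundary_dart _
    (mem_reachAvoiding_self hS.1.1) hS.1.notMem_reachAvoiding
  obtain rfl : d.snd = s := by
    by_contra hne
    exact hd₂ (mem_reachAvoiding_of_adj hd₁ d.adj fun h =>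
      hw _ (w.dart_snd_mem_support_of_mem_darts hd) ⟨h, hne⟩)
  exact ⟨d.fst, hd₁, d.adj⟩

lemma IsMinimalSeparator.mem_iff (hS : IsMinimalSeparator G u v S) :
    z ∈ S ↔ z ∉ reachAvoiding G S u ∧ ∃ a ∈ reachAvoiding G S u, G.Adj a z :=
  ⟨fun hz => ⟨fun h => notMem_of_mem_reachAvoiding h hz, hS.exists_adj hz⟩,
    fun ⟨hz, _, ha, hadj⟩ => not_not.1 fun h => hz (mem_reachAvoiding_of_adj ha hadj h)⟩

lemma IsMinimalSeparator.eq_neighborSet_of_not_nontrivial (hS : IsMinimalSeparator G u v S)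
    (hR : ¬ (reachAvoiding G S u).Nontrivial) : S = G.neighborSet u := by
  have hu := mem_reachAvoiding_self (G := G) hS.1.1
  have hsub := Set.not_nontrivial_iff.1 hR
  ext z
  rw [hS.mem_iff, mem_neighborSet]
  constructor
  · rintro ⟨-, a, ha, hadj⟩
    rwa [hsub ha hu] at hadj
  · exact fun hadj => ⟨fun hz => hadj.ne (hsub hu hz), u, hu, hadj⟩

end Separators

lemma Set.ncard_eq_preimage_inl_add_preimage_inr {α β : Type*} [Finite α] [Finite β]
    (s : Set (α ⊕ β)) : s.ncard = (Sum.inl ⁻¹' s).ncard + (Sum.inr ⁻¹' s).ncard := by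
  conv_lhs => rw [← Set.image_preimage_inl_union_image_preimage_inr s]
  rw [Set.ncard_union_eq Set.disjoint_image_inl_image_inr,
    Set.ncard_image_of_injective _ Sum.inl_injective,
    Set.ncard_image_of_injective _ Sum.inr_injective]

lemma Fin.val_sub_eq_ite {p : ℕ} [NeZero p] (β x y : Fin p) :
    ((y - x : Fin p) : ℕ) = if (x - β).val ≤ (y - β).val then (y - β).val - (x - β).val
      else p + (y - β).val - (x - β).val := by
  rw [← sub_sub_sub_cancel_right y x β]
  split_ifs with h
  · exact Fin.coe_sub_iff_le.2 (Fin.le_def.2 h)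
  · exact Fin.coe_sub_iff_lt.2 (Fin.lt_def.2 (not_le.1 h))

namespace Gkp

variable {k p : ℕ} {S : Set (Fin p ⊕ Fin p)} {u v : Fin p ⊕ Fin p}

@[simp] lemma not_adj_inl_inl (i i' : Fin p) : ¬ (Gkp k p).Adj (.inl i) (.inl i') := by
  simp [Gkp]

@[simp] lemma not_adj_inr_inr (m m' : Fin p) : ¬ (Gkp k p).Adj (.inr m) (.inr m') := by
  simp [Gkp]

lemma exists_inl_mem_and_inr_mem (hR : (reachAvoiding (Gkp k p) S u).Nontrivial) :
    (∃ i, .inl i ∈ reachAvoiding (Gkp k p) S u) ∧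
      ∃ m, .inr m ∈ reachAvoiding (Gkp k p) S u := by
  obtain ⟨z, hz⟩ := hR.nonempty
  obtain ⟨z', hz', hadj⟩ := exists_adj_mem_of_nontrivial hR hz
  rcases z with i | m <;> rcases z' with i' | m'
  · simp at hadj
  · exact ⟨⟨i, hz⟩, m', hz'⟩
  · exact ⟨⟨i', hz'⟩, m, hz⟩
  · simp at hadj

lemma preimage_inr_eq_diff (hS : IsMinimalSeparator (Gkp k p) u v S) :
    Sum.inr ⁻¹' S =
      {m | ∃ i, .inl i ∈ reachAvoiding (Gkp k p) S u ∧ (Gkp k p).Adj (.inl i) (.inr m)} \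
        Sum.inr ⁻¹' reachAvoiding (Gkp k p) S u := by
  ext m
  rw [Set.mem_preimage, hS.mem_iff]
  constructor
  · rintro ⟨hm, (i | _), hz, hadj⟩
    · exact ⟨⟨i, hz, hadj⟩, hm⟩
    · simp at hadj
  · rintro ⟨⟨i, hi, hadj⟩, hm⟩
    exact ⟨hm, _, hi, hadj⟩

lemma preimage_inr_subset (hR : (reachAvoiding (Gkp k p) S u).Nontrivial) :
    Sum.inr ⁻¹' reachAvoiding (Gkp k p) S u ⊆
      {m | ∃ i, .inl i ∈ reachAvoiding (Gkp k p) S u ∧ (Gkp k p).Adj (.inl i) (.inr m)} := by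
  intro m hm
  obtain ⟨(i | _), hz, hadj⟩ := exists_adj_mem_of_nontrivial hR hm
  · exact ⟨i, hz, hadj.symm⟩
  · simp at hadj

variable [NeZero p] {β : Fin p}

lemma adj_inl_inr {i m : Fin p} :
    (Gkp k p).Adj (.inl i) (.inr m) ↔ ((m - i : Fin p) : ℕ) < k := by
  simp only [Gkp, exists_and_left, fromRel_adj, ne_eq, reduceCtorEq, not_false_eq_true,
    Sum.inl.injEq, Sum.inr.injEq, exists_eq_left', false_and, exists_const, and_self, or_false,
    true_and]
  constructor
  · rintro ⟨j, hj, hm⟩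
    have : m - i = Fin.ofNat p j := by
      rw [sub_eq_iff_eq_add', Fin.ext_iff, Fin.val_add, Fin.val_ofNat, Nat.add_mod_mod, hm]
    rw [this, Fin.val_ofNat]
    exact (Nat.mod_le j p).trans_lt hj
  · exact fun h => ⟨_, h, by rw [← Fin.val_add, add_sub_cancel]⟩

lemma adj_inr_inl {i m : Fin p} :
    (Gkp k p).Adj (.inr m) (.inl i) ↔ ((m - i : Fin p) : ℕ) < k := by
  rw [adj_comm, adj_inl_inr]

lemma ncard_neighborSet (hkp : k ≤ p) (z : Fin p ⊕ Fin p) :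
    ((Gkp k p).neighborSet z).ncard = k := by
  have hk : (Fin.val ⁻¹' Set.Iio k : Set (Fin p)).ncard = k := by
    rw [Set.ncard_preimage_of_injective_subset_range Fin.val_injective
      fun j (hj : j ∈ Set.Iio k) => ⟨⟨j, lt_of_lt_of_le hj hkp⟩, rfl⟩, Set.ncard_Iio_nat]
  rcases z with i | m
  · rw [← Set.ncard_preimage_of_injective_subset_range Sum.inr_injective
      (by rintro (_ | m) h <;> simp_all)]
    refine Eq.trans ?_ ((Set.ncard_preimage_of_injective_subset_range
      (sub_left_injective (b := i)) fun j _ => ⟨j + i, add_sub_cancel_right j i⟩).trans hk)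
    congr 1
    ext m
    simp [adj_inl_inr]
  · rw [← Set.ncard_preimage_of_injective_subset_range Sum.inl_injective
      (by rintro (i | _) h <;> simp_all)]
    refine Eq.trans ?_ ((Set.ncard_preimage_of_injective_subset_range
      (sub_right_injective (b := m)) fun j _ => ⟨m - j, sub_sub_cancel m j⟩).trans hk)
    congr 1
    ext i
    simp [adj_inr_inl]

lemma adj_inl_inr_iff_of_add_le {i m : Fin p} (h : (i - β).val + k ≤ p) :
    (Gkp k p).Adj (.inl i) (.inr m) ↔
      (i - β).val ≤ (m - β).val ∧ (m - β).val < (i - β).val + k := by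
  rw [adj_inl_inr, Fin.val_sub_eq_ite β]
  split_ifs <;> omega

lemma add_le_of_inl_mem (hS : IsMinimalSeparator (Gkp k p) u v S)
    (hβ : .inr β ∈ reachAvoiding (Gkp k p) S v) {i : Fin p}
    (hi : .inl i ∈ reachAvoiding (Gkp k p) S u) : (i - β).val + k ≤ p := by
  have hnadj : ¬ (Gkp k p).Adj (.inl i) (.inr β) := fun hadj =>
    Set.disjoint_left.1 hS.1.disjoint_reachAvoiding
      (mem_reachAvoiding_of_adj hi hadj (notMem_of_mem_reachAvoiding hβ)) hβ
  rw [adj_inl_inr, Fin.val_sub_eq_ite β, sub_self, Fin.val_zero] at hnadj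
  split_ifs at hnadj <;> omega

lemma exists_crossing_edge (hS : IsMinimalSeparator (Gkp k p) u v S)
    (hβ : .inr β ∈ reachAvoiding (Gkp k p) S v) {a b : Fin p} {c : ℕ}
    (ha : .inl a ∈ reachAvoiding (Gkp k p) S u) (hb : .inl b ∈ reachAvoiding (Gkp k p) S u)
    (hac : (a - β).val < c) (hcb : c ≤ (b - β).val) :
    ∃ i m, .inl i ∈ reachAvoiding (Gkp k p) S u ∧ .inr m ∈ reachAvoiding (Gkp k p) S u ∧
      (i - β).val < c ∧ c ≤ (m - β).val ∧ (m - β).val < (i - β).val + k := by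
  obtain ⟨w, hw⟩ := exists_walk_of_mem_reachAvoiding ha hb
  obtain ⟨⟨⟨z, z'⟩, hadj⟩, hd, hz, hz'⟩ := w.exists_boundary_dart
    {z | (Sum.elim id id z - β).val < c} hac (not_lt.2 hcb)
  have hzA := hw z (w.dart_fst_mem_support_of_mem_darts hd)
  have hz'A := hw z' (w.dart_snd_mem_support_of_mem_darts hd)
  rcases z with i | m <;> rcases z' with i' | m'
  · simp at hadj
  · rw [adj_inl_inr_iff_of_add_le (add_le_of_inl_mem hS hβ hzA)] at hadj
    exact ⟨i, m', hzA, hz'A, hz, not_lt.1 hz', hadj.2⟩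
  · rw [adj_comm, adj_inl_inr_iff_of_add_le (add_le_of_inl_mem hS hβ hz'A)] at hadj
    simp only [Set.mem_ofPred_eq, Sum.elim_inl, Sum.elim_inr, id] at hz hz'
    omega
  · simp at hadj

lemma exists_adj_inl_mem (hS : IsMinimalSeparator (Gkp k p) u v S)
    (hβ : .inr β ∈ reachAvoiding (Gkp k p) S v) {a b m : Fin p}
    (ha : .inl a ∈ reachAvoiding (Gkp k p) S u) (hb : .inl b ∈ reachAvoiding (Gkp k p) S u)
    (ham : (a - β).val ≤ (m - β).val) (hmb : (m - β).val < (b - β).val + k) :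
    ∃ i, .inl i ∈ reachAvoiding (Gkp k p) S u ∧ (Gkp k p).Adj (.inl i) (.inr m) := by
  rcases lt_or_ge (m - β).val (b - β).val with hm | hm
  · obtain ⟨i, _, hi, -, hic, hcm, hmi⟩ :=
      exists_crossing_edge hS hβ ha hb (c := (m - β).val + 1) (by omega) hm
    exact ⟨i, hi,
      (adj_inl_inr_iff_of_add_le (add_le_of_inl_mem hS hβ hi)).2 ⟨by omega, by omega⟩⟩
  · exact ⟨b, hb, (adj_inl_inr_iff_of_add_le (add_le_of_inl_mem hS hβ hb)).2 ⟨hm, hmb⟩⟩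

lemma inl_mem_of_le_of_le (hS : IsMinimalSeparator (Gkp k p) u v S)
    (hβ : .inr β ∈ reachAvoiding (Gkp k p) S v) {a b i : Fin p}
    (ha : .inl a ∈ reachAvoiding (Gkp k p) S u) (hb : .inl b ∈ reachAvoiding (Gkp k p) S u)
    (hai : (a - β).val ≤ (i - β).val) (hib : (i - β).val ≤ (b - β).val) :
    .inl i ∈ reachAvoiding (Gkp k p) S u := by
  rcases hai.eq_or_lt with h | hai
  · rwa [← sub_left_injective (Fin.val_injective h)]
  have hik : (i - β).val + k ≤ p := by have := add_le_of_inl_mem hS hβ hb; omega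
  have hN : ∀ m, (Gkp k p).Adj (.inl i) (.inr m) →
      .inr m ∈ reachAvoiding (Gkp k p) S u ∨ .inr m ∈ S := by
    intro m hm
    rw [adj_inl_inr_iff_of_add_le hik] at hm
    obtain ⟨i', hi', hadj⟩ := exists_adj_inl_mem hS hβ ha hb (m := m) (by omega) (by omega)
    exact (em _).symm.imp (mem_reachAvoiding_of_adj hi' hadj) id
  have hiS : .inl i ∉ S := by
    intro hiS
    obtain ⟨-, z, hz, hadj⟩ := hS.symm.mem_iff.1 hiS
    rcases z with _ | m
    · simp at hadj
    rcases hN m hadj.symm with hm | hm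
    · exact Set.disjoint_left.1 hS.1.disjoint_reachAvoiding hm hz
    · exact notMem_of_mem_reachAvoiding hz hm
  obtain ⟨i', m, -, hm, hi'i, him, hmi'⟩ := exists_crossing_edge hS hβ ha hb hai hib
  exact mem_reachAvoiding_of_adj hm
    ((adj_comm _ _ _).1 ((adj_inl_inr_iff_of_add_le hik).2 ⟨him, by omega⟩)) hiS

lemma image_offset_preimage_inl (hS : IsMinimalSeparator (Gkp k p) u v S)
    (hβ : .inr β ∈ reachAvoiding (Gkp k p) S v) {a b : Fin p}
    (ha : .inl a ∈ reachAvoiding (Gkp k p) S u) (hb : .inl b ∈ reachAvoiding (Gkp k p) S u)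
    (hmin : ∀ i ∈ Sum.inl ⁻¹' reachAvoiding (Gkp k p) S u, (a - β).val ≤ (i - β).val)
    (hmax : ∀ i ∈ Sum.inl ⁻¹' reachAvoiding (Gkp k p) S u, (i - β).val ≤ (b - β).val) :
    (fun i : Fin p => (i - β).val) '' (Sum.inl ⁻¹' reachAvoiding (Gkp k p) S u) =
      Set.Icc (a - β).val (b - β).val := by
  ext c
  constructor
  · rintro ⟨i, hi, rfl⟩
    exact ⟨hmin i hi, hmax i hi⟩
  · rintro ⟨hac, hcb⟩
    have hc : c < p := hcb.trans_lt (b - β).is_lt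
    refine ⟨⟨c, hc⟩ + β, inl_mem_of_le_of_le hS hβ ha hb ?_ ?_, ?_⟩ <;> simp [hac, hcb]

lemma image_offset_neighbors (hS : IsMinimalSeparator (Gkp k p) u v S)
    (hβ : .inr β ∈ reachAvoiding (Gkp k p) S v) {a b : Fin p}
    (ha : .inl a ∈ reachAvoiding (Gkp k p) S u) (hb : .inl b ∈ reachAvoiding (Gkp k p) S u)
    (hmin : ∀ i ∈ Sum.inl ⁻¹' reachAvoiding (Gkp k p) S u, (a - β).val ≤ (i - β).val)
    (hmax : ∀ i ∈ Sum.inl ⁻¹' reachAvoiding (Gkp k p) S u, (i - β).val ≤ (b - β).val) :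
    (fun m : Fin p => (m - β).val) ''
        {m | ∃ i, .inl i ∈ reachAvoiding (Gkp k p) S u ∧ (Gkp k p).Adj (.inl i) (.inr m)} =
      Set.Ico (a - β).val ((b - β).val + k) := by
  ext c
  constructor
  · rintro ⟨m, ⟨i, hi, hadj⟩, rfl⟩
    rw [adj_inl_inr_iff_of_add_le (add_le_of_inl_mem hS hβ hi)] at hadj
    have := hmin i hi
    have := hmax i hi
    simp only [Set.mem_Ico]
    omega
  · rintro ⟨hac, hcb⟩
    have hc : c < p := by have := add_le_of_inl_mem hS hβ hb; omega
    refine ⟨⟨c, hc⟩ + β, exists_adj_inl_mem hS hβ ha hb ?_ ?_, ?_⟩ <;> simp [hac, hcb]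

lemma ncard_preimage_inr_add (hS : IsMinimalSeparator (Gkp k p) u v S)
    (hu : (reachAvoiding (Gkp k p) S u).Nontrivial)
    (hv : (reachAvoiding (Gkp k p) S v).Nontrivial) :
    (Sum.inr ⁻¹' S).ncard + (Sum.inr ⁻¹' reachAvoiding (Gkp k p) S u).ncard + 1 =
      (Sum.inl ⁻¹' reachAvoiding (Gkp k p) S u).ncard + k := by
  obtain ⟨-, β, hβ⟩ := exists_inl_mem_and_inr_mem hv
  obtain ⟨a, ha, hmin⟩ := Set.exists_min_image _ (fun i => (i - β).val) (Set.toFinite _)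
    (exists_inl_mem_and_inr_mem hu).1
  obtain ⟨b, hb, hmax⟩ := Set.exists_max_image _ (fun i => (i - β).val) (Set.toFinite _)
    (exists_inl_mem_and_inr_mem hu).1
  have hoff : Function.Injective fun i : Fin p => (i - β).val :=
    Fin.val_injective.comp sub_left_injective
  rw [preimage_inr_eq_diff hS, Set.ncard_sdiff_add_ncard_of_subset (preimage_inr_subset hu),
    ← Set.ncard_image_of_injective _ hoff, image_offset_neighbors hS hβ ha hb hmin hmax,
    ← Set.ncard_image_of_injective (Sum.inl ⁻¹' _) hoff,
    image_offset_preimage_inl hS hβ ha hb hmin hmax, Set.ncard_Ico_nat, Set.ncard_Icc_nat]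
  have := hmax a ha
  omega

def mirror : Gkp k p ≃g Gkp k p where
  toFun := Sum.elim (fun i => .inr (-i)) (fun m => .inl (-m))
  invFun := Sum.elim (fun i => .inr (-i)) (fun m => .inl (-m))
  left_inv z := by cases z <;> simp
  right_inv z := by cases z <;> simp
  map_rel_iff' := by
    rintro (i | m) (i' | m') <;> simp [adj_inl_inr, adj_inr_inl, neg_add_eq_sub]

lemma preimage_inr_image_mirror (X : Set (Fin p ⊕ Fin p)) :
    Sum.inr ⁻¹' ((mirror (k := k)) '' X) = -(Sum.inl ⁻¹' X) := by
  ext m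
  simp [mirror, neg_eq_iff_eq_neg]

lemma preimage_inl_image_mirror (X : Set (Fin p ⊕ Fin p)) :
    Sum.inl ⁻¹' ((mirror (k := k)) '' X) = -(Sum.inr ⁻¹' X) := by
  ext m
  simp [mirror, neg_eq_iff_eq_neg]

lemma ncard_preimage_inl_add (hS : IsMinimalSeparator (Gkp k p) u v S)
    (hu : (reachAvoiding (Gkp k p) S u).Nontrivial)
    (hv : (reachAvoiding (Gkp k p) S v).Nontrivial) :
    (Sum.inl ⁻¹' S).ncard + (Sum.inl ⁻¹' reachAvoiding (Gkp k p) S u).ncard + 1 =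
      (Sum.inr ⁻¹' reachAvoiding (Gkp k p) S u).ncard + k := by
  have h := ncard_preimage_inr_add (hS.image mirror)
    (by rw [reachAvoiding_image]; exact hu.image mirror.injective)
    (by rw [reachAvoiding_image]; exact hv.image mirror.injective)
  rwa [reachAvoiding_image, preimage_inr_image_mirror, preimage_inr_image_mirror,
    preimage_inl_image_mirror, Set.ncard_neg, Set.ncard_neg, Set.ncard_neg] at h

end Gkp

theorem Gkp_minimal_separator_card_general (k p : ℕ) (hkp : k ≤ p)
    (u v : Fin p ⊕ Fin p)
    (S : Set (Fin p ⊕ Fin p)) (hS : IsMinimalSeparator (Gkp k p) u v S) :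
    S.ncard = k ∨ S.ncard = 2 * k - 2 := by
  have : NeZero p := ⟨by rintro rfl; exact u.elim Fin.elim0 Fin.elim0⟩
  by_cases hu : (reachAvoiding (Gkp k p) S u).Nontrivial
  · by_cases hv : (reachAvoiding (Gkp k p) S v).Nontrivial
    · have hX := Gkp.ncard_preimage_inr_add hS hu hv
      have hW := Gkp.ncard_preimage_inl_add hS hu hv
      rw [Set.ncard_eq_preimage_inl_add_preimage_inr]
      omega
    · rw [hS.symm.eq_neighborSet_of_not_nontrivial hv, Gkp.ncard_neighborSet hkp]
      exact .inl rfl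
  · rw [hS.eq_neighborSet_of_not_nontrivial hu, Gkp.ncard_neighborSet hkp]
    exact .inl rfl

theorem Gkp_minimal_separator_card (k p : ℕ) (hk : 3 ≤ k) (hkp : k ≤ p)
    (u v : Fin p ⊕ Fin p) (huv : u ≠ v) (hadj : ¬ (Gkp k p).Adj u v)
    (S : Set (Fin p ⊕ Fin p)) (hS : IsMinimalSeparator (Gkp k p) u v S) :
    S.ncard = k ∨ S.ncard = 2 * k - 2 :=
  Gkp_minimal_separator_card_general k p hkp u v S hS

end AvgConn
end

section
/- Let 3 ≤ k ≤ p and let u, v be nonadjacent vertices of G_{k,p}. If S is a minimal vertex separator of u and v with |S| = k, then S = N(u) or S = N(v). -/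
namespace AvgConn

/-!
Suppose `S ≠ N(u)` and `S ≠ N(v)`. Every vertex has degree `k = |S|`, so `u` and `v` both have a
neighbour outside `S`, and each is joined in `G - S` to some `w_i` that is not isolated in `G - S`.
It remains to see that two such vertices `w_a`, `w_b` are connected in `G - S`.

From a non-isolated `w_t` one walks forward through a common `x`-neighbour to the next surviving
`w`. This can only get stuck if `S` contains `w_{t+1}, …, w_{t+r}` and `x_{t+r+1}, …, x_{t+k-1}`
for some `r < k`, which are `k - 1` vertices. If `w_a` and `w_b` were not connected, the walks from
`w_a` to `w_b` and from `w_b` round the cycle back to `w_a` would get stuck at some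
`t₁ < t₂ < t₁ + p`. The surviving neighbours of `w_{t₁}` and `w_{t₂}` force the two stuck
configurations to be disjoint, so `|S| ≥ 2(k - 1) > k`.
-/

open SimpleGraph Finset Fin.NatCast Fin.CommRing

section Separation

variable {V : Type*}

/-- `G - S`, with the vertices of `S` kept as isolated vertices. -/
abbrev deleteVerts (G : SimpleGraph V) (S : Set V) : SimpleGraph V :=
  ((⊤ : G.Subgraph).deleteVerts S).spanningCoe

@[simp] lemma deleteVerts_adj {G : SimpleGraph V} {S : Set V} {a b : V} :
    (deleteVerts G S).Adj a b ↔ a ∉ S ∧ b ∉ S ∧ G.Adj a b := by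
  simp

lemma IsSeparator.not_reachable_deleteVerts {G : SimpleGraph V} {u v : V} {S : Set V}
    (h : IsSeparator G u v S) : ¬ (deleteVerts G S).Reachable u v := by
  rintro ⟨w⟩
  obtain ⟨x, hx, hxS⟩ := h.2.2 (w.mapLe (Subgraph.spanningCoe_le _))
  rw [Walk.support_mapLe_eq_support, ← w.cons_map_snd_darts, List.mem_cons, List.mem_map] at hx
  obtain rfl | ⟨d, -, rfl⟩ := hx
  · exact h.1 hxS
  · exact (deleteVerts_adj.mp d.adj).2.1 hxS

lemma exists_adj_notMem_of_ne_neighborSet [Finite V] {G : SimpleGraph V} {u : V} {S : Set V}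
    (hcard : S.ncard ≤ (G.neighborSet u).ncard) (hS : S ≠ G.neighborSet u) :
    ∃ y, G.Adj u y ∧ y ∉ S := by
  by_contra! h
  exact hS (Set.eq_of_subset_of_ncard_le h hcard).symm

end Separation

section Gkp

variable {k p : ℕ} [NeZero p]

/-- `w_n` and `x_n` for `n : ℕ`, the index read modulo `p`. -/
abbrev wVert (n : ℕ) : Fin p ⊕ Fin p := .inl n

abbrev xVert (n : ℕ) : Fin p ⊕ Fin p := .inr n

lemma natCast_injOn_Iio : Set.InjOn (Nat.cast : ℕ → Fin p) (Set.Iio p) := fun a ha b hb h => by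
  simpa [Fin.ext_iff, Nat.mod_eq_of_lt ha, Nat.mod_eq_of_lt hb] using h

lemma natCast_ne_of_lt_of_lt_add {a b : ℕ} (hab : a < b) (hba : b < a + p) :
    (a : Fin p) ≠ b := by
  intro h
  have hmod : a ≡ b [MOD p] := (by simpa [Fin.ext_iff] using h : a % p = b % p)
  have := hmod.eq_of_abs_lt (by rw [abs_lt]; omega)
  omega

lemma natCast_add_injOn (t : ℕ) :
    Set.InjOn (fun d : ℕ => ((t + d : ℕ) : Fin p)) (Set.Iio p) := by
  intro a ha b hb h
  simp only [Nat.cast_add, add_right_inj] at h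
  exact natCast_injOn_Iio ha hb h

@[simp] lemma wVert_val (i : Fin p) : (wVert i : Fin p ⊕ Fin p) = .inl i := by
  simp

@[simp] lemma wVert_add_self (n : ℕ) : (wVert (n + p) : Fin p ⊕ Fin p) = wVert n := by
  simp

@[simp] lemma xVert_add_self (n : ℕ) : (xVert (n + p) : Fin p ⊕ Fin p) = xVert n := by
  simp

lemma Gkp_adj_inl_inr {i x : Fin p} : (Gkp k p).Adj (.inl i) (.inr x) ↔ ∃ j < k, x = i + j := by
  simp only [Gkp, fromRel_adj, ne_eq, reduceCtorEq, not_false_eq_true, Sum.inl.injEq,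
    Sum.inr.injEq, true_and, false_and, exists_false, or_false]
  simp [Fin.ext_iff, Fin.val_add]

lemma Gkp_adj_inl_inl {i i' : Fin p} : ¬ (Gkp k p).Adj (.inl i) (.inl i') := by
  simp [Gkp]

lemma Gkp_adj_inr_inr {x x' : Fin p} : ¬ (Gkp k p).Adj (.inr x) (.inr x') := by
  simp [Gkp]

lemma Gkp_adj_wVert_iff {n : ℕ} {y : Fin p ⊕ Fin p} :
    (Gkp k p).Adj (wVert n) y ↔ ∃ j < k, y = xVert (n + j) := by
  cases y with
  | inl i => simp [Gkp_adj_inl_inl]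
  | inr x => simp [Gkp_adj_inl_inr]

lemma Gkp_adj_wVert_xVert {m n : ℕ} (h₁ : m ≤ n) (h₂ : n < m + k) :
    (Gkp k p).Adj (wVert m) (xVert n) :=
  Gkp_adj_wVert_iff.mpr ⟨n - m, by omega, by rw [Nat.add_sub_cancel' h₁]⟩

lemma neighborSet_inl (i : Fin p) :
    (Gkp k p).neighborSet (.inl i) = (fun j : ℕ => .inr (i + j)) '' Set.Iio k := by
  ext (y | x)
  · simp [Gkp_adj_inl_inl]
  · simp [Gkp_adj_inl_inr, eq_comm]

lemma neighborSet_inr (x : Fin p) :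
    (Gkp k p).neighborSet (.inr x) = (fun j : ℕ => .inl (x - j)) '' Set.Iio k := by
  ext (i | y)
  · simp [adj_comm, Gkp_adj_inl_inr, eq_sub_iff_add_eq, eq_comm]
  · simp [Gkp_adj_inr_inr]

lemma ncard_neighborSet (hkp : k ≤ p) (u : Fin p ⊕ Fin p) :
    ((Gkp k p).neighborSet u).ncard = k := by
  have hinj := natCast_injOn_Iio.mono (Set.Iio_subset_Iio hkp)
  cases u with
  | inl i =>
    rw [neighborSet_inl, Set.InjOn.ncard_image, ← coe_range, Set.ncard_coe_finset, card_range]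
    exact fun a ha b hb h => hinj ha hb (by simpa using h)
  | inr x =>
    rw [neighborSet_inr, Set.InjOn.ncard_image, ← coe_range, Set.ncard_coe_finset, card_range]
    exact fun a ha b hb h => hinj ha hb (by simpa using h)

variable (k) in
def block (t r : ℕ) : Finset (Fin p ⊕ Fin p) :=
  (Icc 1 r).image (fun d => wVert (t + d)) ∪ (Ioc r (k - 1)).image (fun d => xVert (t + d))

lemma wVert_mem_block {t r d : ℕ} (h₁ : 1 ≤ d) (h₂ : d ≤ r) :
    (wVert (t + d) : Fin p ⊕ Fin p) ∈ block k t r := by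
  simp only [block, mem_union, mem_image, mem_Icc]
  exact Or.inl ⟨d, ⟨h₁, h₂⟩, rfl⟩

lemma xVert_mem_block {t r d : ℕ} (h₁ : r < d) (h₂ : d < k) :
    (xVert (t + d) : Fin p ⊕ Fin p) ∈ block k t r := by
  simp only [block, mem_union, mem_image, mem_Ioc]
  exact Or.inr ⟨d, ⟨h₁, by omega⟩, rfl⟩

lemma card_block (hkp : k ≤ p) {t r : ℕ} (hr : r < k) :
    (block k t r : Finset (Fin p ⊕ Fin p)).card = k - 1 := by
  have hinj : Set.InjOn (fun d : ℕ => ((t + d : ℕ) : Fin p)) (Set.Iio k) :=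
    Set.InjOn.mono (Set.Iio_subset_Iio hkp) (natCast_add_injOn t)
  rw [block, card_union_of_disjoint (by simp [Finset.disjoint_left]),
    card_image_of_injOn fun a ha b hb h => hinj (Set.mem_Iio.mpr (by simp at ha; omega))
      (Set.mem_Iio.mpr (by simp at hb; omega)) (Sum.inl_injective h),
    card_image_of_injOn fun a ha b hb h => hinj (Set.mem_Iio.mpr (by simp at ha; omega))
      (Set.mem_Iio.mpr (by simp at hb; omega)) (Sum.inr_injective h),
    Nat.card_Icc, Nat.card_Ioc]
  omega

lemma coe_block_subset {S : Set (Fin p ⊕ Fin p)} {t r : ℕ}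
    (hw : ∀ d, 0 < d → d ≤ r → wVert (t + d) ∈ S)
    (hx : ∀ d, r < d → d < k → xVert (t + d) ∈ S) :
    ((block k t r : Finset (Fin p ⊕ Fin p)) : Set (Fin p ⊕ Fin p)) ⊆ S := by
  simp only [block, coe_union, coe_image, Set.union_subset_iff, Set.image_subset_iff]
  exact ⟨fun d hd => hw d (by simp at hd; omega) (by simp at hd; omega),
    fun d hd => hx d (by simp at hd; omega) (by simp at hd; omega)⟩

variable (k) in
/-- The forward walk from `w_t` in `G - S` is stuck: the surviving neighbours of `w_t` lie among
`x_t, …, x_{t+r}`, and their `w`-neighbours beyond `w_t` are all deleted. -/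
def IsBlockedAt (S : Set (Fin p ⊕ Fin p)) (t r : ℕ) : Prop :=
  wVert t ∈ (deleteVerts (Gkp k p) S).support ∧ r < k ∧
    ((block k t r : Finset (Fin p ⊕ Fin p)) : Set (Fin p ⊕ Fin p)) ⊆ S

lemma notMem_and_exists_xVert_notMem {S : Set (Fin p ⊕ Fin p)} {t : ℕ}
    (h : wVert t ∈ (deleteVerts (Gkp k p) S).support) :
    wVert t ∉ S ∧ ∃ a < k, xVert (t + a) ∉ S := by
  obtain ⟨y, hy⟩ := (mem_support _).mp h
  simp only [deleteVerts_adj, Gkp_adj_wVert_iff] at hy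
  obtain ⟨htS, hyS, a, ha, rfl⟩ := hy
  exact ⟨htS, a, ha, hyS⟩

lemma IsBlockedAt.exists_xVert_notMem {S : Set (Fin p ⊕ Fin p)} {t r : ℕ}
    (h : IsBlockedAt k S t r) : wVert t ∉ S ∧ ∃ a ≤ r, xVert (t + a) ∉ S := by
  obtain ⟨htS, a, ha, haS⟩ := notMem_and_exists_xVert_notMem h.1
  refine ⟨htS, a, ?_, haS⟩
  by_contra! har
  exact haS (h.2.2 (xVert_mem_block har ha))

lemma IsBlockedAt.disjoint_block {S : Set (Fin p ⊕ Fin p)} {t₁ t₂ r₁ r₂ : ℕ}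
    (h₁ : IsBlockedAt k S t₁ r₁) (h₂ : IsBlockedAt k S t₂ r₂) (h₁₂ : t₁ < t₂)
    (h₂₁ : t₂ < t₁ + p) :
    Disjoint (block k t₁ r₁ : Finset (Fin p ⊕ Fin p)) (block k t₂ r₂) := by
  obtain ⟨hw₁, a₁, ha₁, hx₁⟩ := h₁.exists_xVert_notMem
  obtain ⟨hw₂, a₂, ha₂, hx₂⟩ := h₂.exists_xVert_notMem
  have hr₁ : r₁ < t₂ - t₁ := by
    by_contra! h
    have := h₁.2.2 (wVert_mem_block (t := t₁) (d := t₂ - t₁) (by omega) h)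
    rw [Nat.add_sub_cancel' h₁₂.le] at this
    exact hw₂ this
  have hr₂ : r₂ < t₁ + p - t₂ := by
    by_contra! h
    have := h₂.2.2 (wVert_mem_block (t := t₂) (d := t₁ + p - t₂) (by omega) h)
    rw [Nat.add_sub_cancel' h₂₁.le, wVert_add_self] at this
    exact hw₁ this
  have hk₁ : k ≤ t₁ + p - t₂ + a₁ := by
    by_contra! h
    have := h₂.2.2 (xVert_mem_block (t := t₂) (d := t₁ + p - t₂ + a₁) (by omega) h)
    rw [show t₂ + (t₁ + p - t₂ + a₁) = t₁ + a₁ + p by omega, xVert_add_self] at this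
    exact hx₁ this
  have hk₂ : k ≤ t₂ - t₁ + a₂ := by
    by_contra! h
    have := h₁.2.2 (xVert_mem_block (t := t₁) (d := t₂ - t₁ + a₂) (by omega) h)
    rw [show t₁ + (t₂ - t₁ + a₂) = t₂ + a₂ by omega] at this
    exact hx₂ this
  -- each vertex of the second block lies strictly between one of the first and its shift by `p`
  rw [block, block, Finset.disjoint_union_left, Finset.disjoint_union_right,
    Finset.disjoint_union_right]
  refine ⟨⟨?_, ?_⟩, ?_, ?_⟩ <;>
    simp only [Finset.disjoint_left, mem_image, mem_Icc, mem_Ioc] <;>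
    rintro _ ⟨d, hd, rfl⟩ ⟨d', hd', h⟩
  · exact natCast_ne_of_lt_of_lt_add (by omega) (by omega) (Sum.inl_injective h).symm
  · simp at h
  · simp at h
  · exact natCast_ne_of_lt_of_lt_add (by omega) (by omega) (Sum.inr_injective h).symm

lemma IsBlockedAt.two_mul_le_ncard (hkp : k ≤ p) {S : Set (Fin p ⊕ Fin p)}
    {t₁ t₂ r₁ r₂ : ℕ} (h₁ : IsBlockedAt k S t₁ r₁) (h₂ : IsBlockedAt k S t₂ r₂)
    (h₁₂ : t₁ < t₂) (h₂₁ : t₂ < t₁ + p) : 2 * (k - 1) ≤ S.ncard :=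
  calc 2 * (k - 1) = (block k t₁ r₁ ∪ block k t₂ r₂).card := by
        rw [card_union_of_disjoint (h₁.disjoint_block h₂ h₁₂ h₂₁), card_block hkp h₁.2.1,
          card_block hkp h₂.2.1]
        ring
    _ ≤ S.ncard := by
        rw [← Set.ncard_coe_finset, coe_union]
        exact Set.ncard_le_ncard (Set.union_subset h₁.2.2 h₂.2.2)

lemma isBlockedAt_or_exists_step {S : Set (Fin p ⊕ Fin p)} {t : ℕ}
    (ht : wVert t ∈ (deleteVerts (Gkp k p) S).support) :
    (∃ r, IsBlockedAt k S t r) ∨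
      ∃ d, 0 < d ∧ (∀ e, 0 < e → e < d → wVert (t + e) ∈ S) ∧
        wVert (t + d) ∈ (deleteVerts (Gkp k p) S).support ∧
        (deleteVerts (Gkp k p) S).Reachable (wVert t) (wVert (t + d)) := by
  classical
  obtain ⟨htS, a, ha, -⟩ := notMem_and_exists_xVert_notMem ht
  by_cases hlive : ∃ d, 0 < d ∧ d < k ∧ wVert (t + d) ∉ S
  swap
  · push Not at hlive
    exact Or.inl ⟨k - 1, ht, by omega,
      coe_block_subset (fun d hd hdk => hlive d hd (by omega)) (fun d hd hdk => by omega)⟩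
  obtain ⟨d, ⟨hd, hdk, hdS⟩, hbefore⟩ : ∃ d, (0 < d ∧ d < k ∧ wVert (t + d) ∉ S) ∧
      ∀ e, 0 < e → e < d → wVert (t + e) ∈ S :=
    ⟨Nat.find hlive, Nat.find_spec hlive, fun e he hed => by
      by_contra h
      exact Nat.find_min hlive hed ⟨he, hed.trans (Nat.find_spec hlive).2.1, h⟩⟩
  by_cases hcross : ∃ e, d ≤ e ∧ e < k ∧ xVert (t + e) ∉ S
  · obtain ⟨e, hde, hek, heS⟩ := hcross
    have hadj₁ : (deleteVerts (Gkp k p) S).Adj (wVert t) (xVert (t + e)) :=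
      deleteVerts_adj.mpr ⟨htS, heS, Gkp_adj_wVert_xVert (by omega) (by omega)⟩
    have hadj₂ : (deleteVerts (Gkp k p) S).Adj (wVert (t + d)) (xVert (t + e)) :=
      deleteVerts_adj.mpr ⟨hdS, heS, Gkp_adj_wVert_xVert (by omega) (by omega)⟩
    exact Or.inr ⟨d, hd, hbefore, (mem_support _).mpr ⟨_, hadj₂⟩,
      hadj₁.reachable.trans hadj₂.reachable.symm⟩
  · push Not at hcross
    exact Or.inl ⟨d - 1, ht, by omega,
      coe_block_subset (fun e he her => hbefore e he (by omega))
        (fun e he hek => hcross e (by omega) hek)⟩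

lemma exists_isBlockedAt_of_not_reachable {S : Set (Fin p ⊕ Fin p)} {t β : ℕ} (htβ : t < β)
    (ht : wVert t ∈ (deleteVerts (Gkp k p) S).support) (hβ : wVert β ∉ S)
    (hreach : ¬ (deleteVerts (Gkp k p) S).Reachable (wVert t) (wVert β)) :
    ∃ t' r, t ≤ t' ∧ t' < β ∧ IsBlockedAt k S t' r := by
  induction hn : β - t using Nat.strong_induction_on generalizing t with
  | _ n ih =>
    rcases isBlockedAt_or_exists_step ht with ⟨r, hr⟩ | ⟨d, hd, hbefore, hsupp, hreach'⟩
    · exact ⟨t, r, le_rfl, htβ, hr⟩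
    rcases lt_trichotomy (t + d) β with hlt | heq | hgt
    · obtain ⟨t', r, ht', ht'β, hblock⟩ :=
        ih _ (by omega) hlt hsupp (fun h => hreach (hreach'.trans h)) rfl
      exact ⟨t', r, by omega, ht'β, hblock⟩
    · exact absurd (heq ▸ hreach') hreach
    · have := hbefore (β - t) (by omega) (by omega)
      rw [Nat.add_sub_cancel' htβ.le] at this
      exact absurd this hβ

lemma reachable_wVert_of_lt (hk : 3 ≤ k) (hkp : k ≤ p) {S : Set (Fin p ⊕ Fin p)}
    (hS : S.ncard ≤ k) {a b : ℕ} (hab : a < b) (hba : b < a + p)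
    (ha : wVert a ∈ (deleteVerts (Gkp k p) S).support)
    (hb : wVert b ∈ (deleteVerts (Gkp k p) S).support) :
    (deleteVerts (Gkp k p) S).Reachable (wVert a) (wVert b) := by
  by_contra h
  obtain ⟨t₁, r₁, ht₁, ht₁b, h₁⟩ :=
    exists_isBlockedAt_of_not_reachable hab ha (notMem_and_exists_xVert_notMem hb).1 h
  obtain ⟨t₂, r₂, ht₂, ht₂a, h₂⟩ := exists_isBlockedAt_of_not_reachable (β := a + p) hba hb
    (by simpa using (notMem_and_exists_xVert_notMem ha).1) (by simpa [reachable_comm] using h)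
  have := h₁.two_mul_le_ncard hkp h₂ (by omega) (by omega)
  omega

lemma reachable_inl_of_mem_support (hk : 3 ≤ k) (hkp : k ≤ p) {S : Set (Fin p ⊕ Fin p)}
    (hS : S.ncard ≤ k) {i j : Fin p} (hi : .inl i ∈ (deleteVerts (Gkp k p) S).support)
    (hj : .inl j ∈ (deleteVerts (Gkp k p) S).support) :
    (deleteVerts (Gkp k p) S).Reachable (.inl i) (.inl j) := by
  rcases lt_trichotomy i j with h | rfl | h
  · simpa using reachable_wVert_of_lt hk hkp hS (a := i) (b := j) h (by omega)
      (by simpa using hi) (by simpa using hj)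
  · rfl
  · simpa [reachable_comm] using reachable_wVert_of_lt hk hkp hS (a := j) (b := i) h (by omega)
      (by simpa using hj) (by simpa using hi)

lemma exists_inl_mem_support_reachable {S : Set (Fin p ⊕ Fin p)} {u y : Fin p ⊕ Fin p}
    (hu : u ∉ S) (huy : (Gkp k p).Adj u y) (hy : y ∉ S) :
    ∃ i : Fin p, .inl i ∈ (deleteVerts (Gkp k p) S).support ∧
      (deleteVerts (Gkp k p) S).Reachable u (.inl i) := by
  have hadj : (deleteVerts (Gkp k p) S).Adj u y := deleteVerts_adj.mpr ⟨hu, hy, huy⟩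
  rcases u with i | x
  · exact ⟨i, (mem_support _).mpr ⟨y, hadj⟩, .rfl⟩
  rcases y with i | y
  · exact ⟨i, (mem_support _).mpr ⟨_, hadj.symm⟩, hadj.reachable⟩
  · exact absurd huy Gkp_adj_inr_inr

end Gkp

theorem Gkp_minimal_separator_of_card_k_general (k p : ℕ) (hk : 3 ≤ k) (hkp : k ≤ p)
    (u v : Fin p ⊕ Fin p)
    (S : Set (Fin p ⊕ Fin p)) (hS : IsMinimalSeparator (Gkp k p) u v S)
    (hcard : S.ncard = k) :
    S = (Gkp k p).neighborSet u ∨ S = (Gkp k p).neighborSet v := by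
  have : NeZero p := ⟨by omega⟩
  by_contra! hne
  obtain ⟨hsep, -⟩ := hS
  have hcard' (w : Fin p ⊕ Fin p) : S.ncard ≤ ((Gkp k p).neighborSet w).ncard := by
    rw [hcard, ncard_neighborSet hkp]
  obtain ⟨a, hua, haS⟩ := exists_adj_notMem_of_ne_neighborSet (hcard' u) hne.1
  obtain ⟨b, hvb, hbS⟩ := exists_adj_notMem_of_ne_neighborSet (hcard' v) hne.2
  obtain ⟨i, hi, hui⟩ := exists_inl_mem_support_reachable hsep.1 hua haS
  obtain ⟨j, hj, hvj⟩ := exists_inl_mem_support_reachable hsep.2.1 hvb hbS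
  exact hsep.not_reachable_deleteVerts
    (hui.trans ((reachable_inl_of_mem_support hk hkp hcard.le hi hj).trans hvj.symm))

theorem Gkp_minimal_separator_of_card_k (k p : ℕ) (hk : 3 ≤ k) (hkp : k ≤ p)
    (u v : Fin p ⊕ Fin p) (huv : u ≠ v) (hadj : ¬ (Gkp k p).Adj u v)
    (S : Set (Fin p ⊕ Fin p)) (hS : IsMinimalSeparator (Gkp k p) u v S)
    (hcard : S.ncard = k) :
    S = (Gkp k p).neighborSet u ∨ S = (Gkp k p).neighborSet v :=
  Gkp_minimal_separator_of_card_k_general k p hk hkp u v S hS hcard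

end AvgConn
end

section
/- Let 3 ≤ k ≤ p and let Γ_{k,p} be the graph on vertex set W ∪ X_1 ∪ X_2 ∪ X_3, where W = {w_0,…,w_{p−1}} and each X_m = {x^m_0,…,x^m_{p−1}}, and where w_i is adjacent to x^m_{i+j mod p} for all m ∈ {1,2,3} and 0 ≤ j ≤ k−1. Then Γ_{k,p} is minimally k-edge-connected. -/
/-!
Every vertex `x^m_t` has degree exactly `k`, and every edge of `Γ_{k,p}` is incident to such a
vertex. Deleting the `k` edges at `x^m_t` isolates it, so `λ(Γ) ≤ k`; and if `e` is incident to
`x^m_t`, deleting the other `k - 1` edges at `x^m_t` isolates it in `Γ - e`, so `λ(Γ - e) < k`.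
Conversely, after deleting fewer than `k` edges every `x`-vertex keeps a neighbour in `W`, and
`w_i`, `w_{i+1}` stay joined: their `3(k - 1) ≥ k` common neighbours give edge-disjoint paths
of length two, which cannot all be cut.
-/

namespace AvgConn

/-- The graph `Γ_{k,p}`: three copies of `G_{k,p}` sharing the vertex set `W`.  The vertices of
`W` are given by `Sum.inl`, and the vertex `x^m_t` by `Sum.inr (m, t)`; `w_i` is adjacent to
`x^m_{(i+j) mod p}` for all `m` and `0 ≤ j ≤ k-1`. -/
def Gamma (k p : ℕ) : SimpleGraph (Fin p ⊕ Fin 3 × Fin p) :=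
  SimpleGraph.fromRel (fun a b => ∃ (i : Fin p) (m : Fin 3) (x : Fin p),
    a = Sum.inl i ∧ b = Sum.inr (m, x) ∧ ∃ j, j < k ∧ (x : ℕ) = ((i : ℕ) + j) % p)

open SimpleGraph

section General

variable {V : Type*} {G : SimpleGraph V}

lemma edgeConn_le_ncard {F : Set (Sym2 V)} (hF : F ⊆ G.edgeSet)
    (hdis : ¬ (G.deleteEdges F).Connected) : edgeConn G ≤ F.ncard :=
  Nat.sInf_le ⟨F, hF, rfl, hdis⟩

lemma not_connected_deleteEdges_incidenceSet [Nontrivial V] (v : V) :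
    ¬ (G.deleteEdges (G.incidenceSet v)).Connected := by
  intro hconn
  obtain ⟨u, hu⟩ := exists_ne v
  obtain ⟨w⟩ := hconn.preconnected v u
  have hadj := w.adj_snd (mt Walk.Nil.eq hu.symm)
  rw [deleteEdges_adj, mem_incidenceSet] at hadj
  exact hadj.2 hadj.1

lemma edgeConn_le_ncard_incidenceSet [Nontrivial V] (v : V) :
    edgeConn G ≤ (G.incidenceSet v).ncard :=
  edgeConn_le_ncard (G.incidenceSet_subset v) (not_connected_deleteEdges_incidenceSet v)

lemma le_edgeConn [Nontrivial V] {n : ℕ}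
    (h : ∀ F ⊆ G.edgeSet, F.ncard < n → (G.deleteEdges F).Connected) : n ≤ edgeConn G := by
  obtain ⟨v⟩ : Nonempty V := inferInstance
  obtain ⟨F, hF, hcard, hdis⟩ : edgeConn G ∈ _ :=
    Nat.sInf_mem ⟨_, G.incidenceSet v, G.incidenceSet_subset v, rfl,
      not_connected_deleteEdges_incidenceSet v⟩
  by_contra! hlt
  exact hdis (h F hF (hcard ▸ hlt))

lemma incidenceSet_deleteEdges (F : Set (Sym2 V)) (v : V) :
    (G.deleteEdges F).incidenceSet v = G.incidenceSet v \ F := by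
  ext e
  simp only [incidenceSet, edgeSet_deleteEdges, Set.mem_sdiff, Set.mem_ofPred_eq]
  tauto

lemma edgeConn_deleteEdges_lt [Finite V] [Nontrivial V] {e : Sym2 V} {v : V}
    (he : e ∈ G.edgeSet) (hv : v ∈ e) :
    edgeConn (G.deleteEdges {e}) < (G.incidenceSet v).ncard :=
  calc edgeConn (G.deleteEdges {e})
      ≤ ((G.deleteEdges {e}).incidenceSet v).ncard := edgeConn_le_ncard_incidenceSet v
    _ = (G.incidenceSet v \ {e}).ncard := by rw [incidenceSet_deleteEdges]
    _ < (G.incidenceSet v).ncard := Set.ncard_sdiff_singleton_lt_of_mem ⟨he, hv⟩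

lemma exists_adj_deleteEdges_of_ncard_lt [Finite V] {F : Set (Sym2 V)} {v : V}
    (h : F.ncard < (G.incidenceSet v).ncard) : ∃ w, (G.deleteEdges F).Adj v w := by
  obtain ⟨e, he, heF⟩ := Set.exists_mem_notMem_of_ncard_lt_ncard h
  have he' : e ∈ (G.deleteEdges F).incidenceSet v := by
    rw [incidenceSet_deleteEdges]
    exact ⟨he, heF⟩
  obtain ⟨w, rfl⟩ := Sym2.mem_iff_exists.1 he'.2
  exact ⟨w, (mem_incidenceSet _ _ _).1 he'⟩

lemma reachable_deleteEdges_of_ncard_lt_commonNeighbors [Finite V] {F : Set (Sym2 V)} {u v : V}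
    (h : F.ncard < (G.commonNeighbors u v).ncard) : (G.deleteEdges F).Reachable u v := by
  classical
  by_contra hnr
  have hblocked : ∀ c ∈ G.commonNeighbors u v, s(u, c) ∈ F ∨ s(v, c) ∈ F := by
    intro c hc
    rw [mem_commonNeighbors] at hc
    by_contra! hfree
    exact hnr ((deleteEdges_adj.2 ⟨hc.1, hfree.1⟩).reachable.trans
      (deleteEdges_adj.2 ⟨hc.2, hfree.2⟩).symm.reachable)
  let g : V → Sym2 V := fun c => if s(u, c) ∈ F then s(u, c) else s(v, c)
  have hg : ∀ c, ∃ a, (a = u ∨ a = v) ∧ g c = s(a, c) := fun c => by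
    by_cases hc : s(u, c) ∈ F
    · exact ⟨u, .inl rfl, if_pos hc⟩
    · exact ⟨v, .inr rfl, if_neg hc⟩
  refine (Set.ncard_le_ncard_of_injOn g (fun c hc => ?_) (fun c hc c' hc' hcc' => ?_)).not_gt h
  · by_cases huc : s(u, c) ∈ F
    · simp [g, huc]
    · simpa [g, huc] using (hblocked c hc).resolve_left huc
  · obtain ⟨a, ha, hga⟩ := hg c'
    obtain ⟨b, -, hgb⟩ := hg c
    have hmem : c ∈ s(a, c') := by
      rw [← hga, ← hcc', hgb]
      exact Sym2.mem_mk_right _ _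
    rw [mem_commonNeighbors] at hc
    rcases Sym2.mem_iff.1 hmem with rfl | rfl
    · rcases ha with rfl | rfl
      · exact absurd rfl hc.1.ne'
      · exact absurd rfl hc.2.ne'
    · rfl

end General

section Gamma

open Fin.NatCast

variable {k p : ℕ}

lemma gamma_adj_inl_inr [NeZero p] (hkp : k ≤ p) {i x : Fin p} {m : Fin 3} :
    (Gamma k p).Adj (.inl i) (.inr (m, x)) ↔ ((x - i : Fin p) : ℕ) < k := by
  have hshift : ∀ j : ℕ, ((x : ℕ) = ((i : ℕ) + j) % p ↔ x - i = (j : Fin p)) := fun j => by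
    rw [sub_eq_iff_eq_add', Fin.ext_iff, Fin.val_add, Fin.val_natCast, Nat.add_mod_mod]
  have hadj : (Gamma k p).Adj (.inl i) (.inr (m, x)) ↔ ∃ j < k, x - i = (j : Fin p) := by
    simp [Gamma, hshift]
  rw [hadj]
  constructor
  · rintro ⟨j, hj, hx⟩
    rw [hx, Fin.val_natCast, Nat.mod_eq_of_lt (by omega)]
    exact hj
  · exact fun h => ⟨_, h, (Fin.cast_val_eq_self _).symm⟩

lemma gamma_not_adj_inl_inl {i i' : Fin p} : ¬ (Gamma k p).Adj (.inl i) (.inl i') := by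
  simp [Gamma]

lemma gamma_not_adj_inr_inr {y y' : Fin 3 × Fin p} : ¬ (Gamma k p).Adj (.inr y) (.inr y') := by
  simp [Gamma]

lemma exists_inr_mem_of_mem_edgeSet {e : Sym2 (Fin p ⊕ Fin 3 × Fin p)}
    (he : e ∈ (Gamma k p).edgeSet) : ∃ y, Sum.inr y ∈ e := by
  induction e using Sym2.ind with
  | _ a b =>
    rcases a with i | y
    · rcases b with i' | y
      · exact absurd he gamma_not_adj_inl_inl
      · exact ⟨y, Sym2.mem_mk_right _ _⟩
    · exact ⟨y, Sym2.mem_mk_left _ _⟩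

lemma gamma_neighborSet_inr [NeZero p] (hkp : k ≤ p) (m : Fin 3) (x : Fin p) :
    (Gamma k p).neighborSet (.inr (m, x)) =
      Set.range fun j : Fin k => .inl (x - Fin.castLE hkp j) := by
  ext (i | y)
  · rw [mem_neighborSet, adj_comm, gamma_adj_inl_inr hkp]
    constructor
    · intro h
      exact ⟨⟨_, h⟩, by simp [Fin.castLE]⟩
    · rintro ⟨j, hj⟩
      cases hj
      simp
  · simp [gamma_not_adj_inr_inr]

lemma ncard_incidenceSet_gamma_inr [NeZero p] (hkp : k ≤ p) (y : Fin 3 × Fin p) :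
    ((Gamma k p).incidenceSet (.inr y)).ncard = k := by
  rw [← Nat.card_coe_set_eq, Nat.card_congr ((Gamma k p).incidenceSetEquivNeighborSet _),
    Nat.card_coe_set_eq, gamma_neighborSet_inr hkp, Set.ncard_range_of_injective, Nat.card_fin]
  exact Sum.inl_injective.comp (sub_right_injective.comp (Fin.castLE_injective hkp))

lemma le_ncard_commonNeighbors_gamma [NeZero p] (hk : 2 ≤ k) (hkp : k ≤ p) (i : Fin p) :
    k ≤ ((Gamma k p).commonNeighbors (.inl i) (.inl (i + 1))).ncard := by
  let f : Fin 3 × Fin (k - 1) → Fin p ⊕ Fin 3 × Fin p :=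
    fun q => .inr (q.1, i + 1 + Fin.castLE (by omega) q.2)
  have hf : Function.Injective f := by
    rintro ⟨m, c⟩ ⟨m', c'⟩ h
    simpa [f, Fin.castLE_injective] using h
  have hsub : Set.range f ⊆ (Gamma k p).commonNeighbors (.inl i) (.inl (i + 1)) := by
    rintro _ ⟨⟨m, c⟩, rfl⟩
    dsimp only [f]
    have hc : (c : ℕ) < k - 1 := c.isLt
    refine (mem_commonNeighbors _).2 ⟨(gamma_adj_inl_inr hkp).2 ?_, (gamma_adj_inl_inr hkp).2 ?_⟩
    · rw [add_assoc, add_sub_cancel_left, Fin.val_add, Fin.val_one', Fin.val_castLE]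
      have := Nat.mod_le 1 p
      have := Nat.mod_le (1 % p + c) p
      omega
    · rw [add_sub_cancel_left, Fin.val_castLE]
      omega
  calc k ≤ 3 * (k - 1) := by omega
    _ = (Set.range f).ncard := by simp [Set.ncard_range_of_injective hf]
    _ ≤ _ := Set.ncard_le_ncard hsub

lemma gamma_deleteEdges_connected [NeZero p] (hk : 2 ≤ k) (hkp : k ≤ p)
    {F : Set (Sym2 (Fin p ⊕ Fin 3 × Fin p))} (hF : F.ncard < k) :
    ((Gamma k p).deleteEdges F).Connected := by
  set H := (Gamma k p).deleteEdges F
  have hstep : ∀ i : Fin p, H.Reachable (.inl i) (.inl (i + 1)) := fun i =>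
    reachable_deleteEdges_of_ncard_lt_commonNeighbors
      (hF.trans_le (le_ncard_commonNeighbors_gamma hk hkp i))
  have hW : ∀ i : Fin p, H.Reachable (.inl 0) (.inl i) := by
    suffices ∀ n : ℕ, H.Reachable (.inl 0) (.inl (n : Fin p)) from
      fun i => Fin.cast_val_eq_self i ▸ this i
    intro n
    induction n with
    | zero => simp
    | succ n ih =>
      rw [Nat.cast_succ]
      exact ih.trans (hstep _)
  refine (connected_iff_exists_forall_reachable H).2 ⟨.inl 0, ?_⟩
  rintro (i | y)
  · exact hW i
  · obtain ⟨w, hw⟩ := exists_adj_deleteEdges_of_ncard_lt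
      (hF.trans_eq (ncard_incidenceSet_gamma_inr hkp y).symm)
    rcases w with i | y'
    · exact (hW i).trans hw.symm.reachable
    · exact absurd (deleteEdges_adj.1 hw).1 gamma_not_adj_inr_inr

end Gamma

theorem Gamma_minimally_k_edge_connected (k p : ℕ) (hk : 3 ≤ k) (hkp : k ≤ p) :
    MinimallyKEdgeConnected (Gamma k p) k := by
  have : NeZero p := ⟨by omega⟩
  have : Nontrivial (Fin p ⊕ Fin 3 × Fin p) := ⟨⟨.inl 0, .inr (0, 0), Sum.inl_ne_inr⟩⟩
  have hdeg := ncard_incidenceSet_gamma_inr hkp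
  refine ⟨le_antisymm ?_ ?_, fun e he => ?_⟩
  · exact (edgeConn_le_ncard_incidenceSet _).trans_eq (hdeg (0, 0))
  · exact le_edgeConn fun F _ hF => gamma_deleteEdges_connected (by omega) hkp hF
  · obtain ⟨y, hy⟩ := exists_inr_mem_of_mem_edgeSet he
    exact (edgeConn_deleteEdges_lt he hy).trans_eq (hdeg y)

end AvgConn
end
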